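/- Let G be a finite bipartite multigraph (no loops). Then the sequence of successive differences ν_{k+1}(G) − ν_k(G) is non-increasing in k; that is, for every k ≥ 1, ν_k(G) − ν_{k−1}(G) ≥ ν_{k+1}(G) − ν_k(G). -/

import Mathlib

variable {V E : Type*}

/-- Degree of vertex `v` in the edge set `A` of a multigraph given by `ends`. -/
def degIn [DecidableEq V] (ends : E → Sym2 V) (A : Finset E) (v : V) : ℕ :=
  (A.filter (fun e => v ∈ ends e)).card

/-- The edge set `A` admits a proper edge coloring with at most `k` colors:
adjacent (distinct, sharing an endpoint) edges get different colors. -/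
def EdgeColorable (ends : E → Sym2 V) (A : Finset E) (k : ℕ) : Prop :=
  ∃ c : E → ℕ, (∀ e ∈ A, c e < k) ∧
    ∀ e₁ ∈ A, ∀ e₂ ∈ A, e₁ ≠ e₂ → (∃ v, v ∈ ends e₁ ∧ v ∈ ends e₂) → c e₁ ≠ c e₂

/-- `ν_k`: the maximum number of edges of a `k`-edge-colorable subgraph whose
edge set lies in `ground`. -/
noncomputable def nu (ends : E → Sym2 V) (ground : Finset E) (k : ℕ) : ℕ :=
  sSup {n | ∃ F : Finset E, F ⊆ ground ∧ EdgeColorable ends F k ∧ F.card = n}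

/-- The multigraph given by `ends` is bipartite. -/
def IsBipartite (ends : E → Sym2 V) : Prop :=
  ∃ f : V → Bool, ∀ e : E, ∀ u v : V, ends e = s(u, v) → f u ≠ f v

/-- There is an `A`-augmenting path: a simple path of odd length whose
odd-numbered (1st, 3rd, ...) edges lie outside `A`, whose even-numbered
(2nd, 4th, ...) edges belong to `A`, and whose endpoints have degree
at most `k - 1` in `A`. -/
def IsAugPath [DecidableEq V] (ends : E → Sym2 V) (A : Finset E) (k : ℕ) : Prop :=
  ∃ (m : ℕ) (vs : Fin (m + 1) → V) (es : Fin m → E),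
    Odd m ∧ Function.Injective vs ∧
    (∀ i : Fin m, ends (es i) = s(vs i.castSucc, vs i.succ)) ∧
    (∀ i : Fin m, (i : ℕ) % 2 = 0 → es i ∉ A) ∧
    (∀ i : Fin m, (i : ℕ) % 2 = 1 → es i ∈ A) ∧
    degIn ends A (vs 0) ≤ k - 1 ∧ degIn ends A (vs (Fin.last m)) ≤ k - 1

/-!
Take a largest `(k - 1)`-edge-colorable `A` and a largest `(k + 1)`-edge-colorable `B`. Put
`A ∩ B` on both sides and split the rest of `A ∪ B` so that at every vertex each half gets at most
half (rounded up) of its edges there. As `deg_A + deg_B ≤ 2k` at every vertex, both sides have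
maximum degree at most `k`, so by König's edge-coloring theorem both are `k`-edge-colorable; their
sizes add up to `|A| + |B|`, whence `ν_{k-1} + ν_{k+1} ≤ 2 ν_k`.

König's theorem is proved by Kempe-chain recoloring, which needs bipartiteness to keep the chain
from reaching the other end of the edge being colored. The balanced split is König's theorem with
two colors, applied after splitting every vertex into copies of degree at most two.
-/

open Finset

section Degrees

variable [DecidableEq V] {ends : E → Sym2 V}

lemma degIn_mono {A B : Finset E} (h : A ⊆ B) (w : V) : degIn ends A w ≤ degIn ends B w :=
  card_le_card (filter_subset_filter _ h)

lemma degIn_union_of_disjoint [DecidableEq E] {A B : Finset E} (h : Disjoint A B) (w : V) :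
    degIn ends (A ∪ B) w = degIn ends A w + degIn ends B w := by
  rw [degIn, filter_union, card_union_of_disjoint (disjoint_filter_filter h)]; rfl

lemma degIn_union_add_degIn_inter [DecidableEq E] (A B : Finset E) (w : V) :
    degIn ends (A ∪ B) w + degIn ends (A ∩ B) w = degIn ends A w + degIn ends B w := by
  rw [degIn, degIn, filter_union, filter_inter_distrib]
  exact card_union_add_card_inter _ _

lemma degIn_sdiff_add_degIn [DecidableEq E] {A I : Finset E} (h : I ⊆ A) (w : V) :
    degIn ends (A \ I) w + degIn ends I w = degIn ends A w := by
  rw [← degIn_union_of_disjoint sdiff_disjoint, sdiff_union_of_subset h]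

lemma degIn_insert [DecidableEq E] {A : Finset E} {e : E} {w : V} (he : e ∉ A)
    (hw : w ∈ ends e) : degIn ends (insert e A) w = degIn ends A w + 1 := by
  rw [degIn, filter_insert, if_pos hw, card_insert_of_notMem (fun h => he (mem_filter.1 h).1)]
  rfl

end Degrees

-- `EdgeColorable ends A k` unfolds to `∃ c, IsProperColoring ends A k c`.
def IsProperColoring (ends : E → Sym2 V) (A : Finset E) (k : ℕ) (c : E → ℕ) : Prop :=
  (∀ e ∈ A, c e < k) ∧
    ∀ e₁ ∈ A, ∀ e₂ ∈ A, e₁ ≠ e₂ → (∃ v, v ∈ ends e₁ ∧ v ∈ ends e₂) → c e₁ ≠ c e₂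

def ColorFreeAt (ends : E → Sym2 V) (A : Finset E) (c : E → ℕ) (w : V) (γ : ℕ) : Prop :=
  ∀ e ∈ A, w ∈ ends e → c e ≠ γ

section Coloring

variable {ends : E → Sym2 V} {A : Finset E} {k : ℕ} {c : E → ℕ}

lemma EdgeColorable.degIn_le [DecidableEq V] (h : EdgeColorable ends A k) (w : V) :
    degIn ends A w ≤ k := by
  obtain ⟨c, hlt, hprop⟩ := h
  simpa [degIn] using card_le_card_of_injOn (t := range k) c
    (fun e he => mem_range.2 (hlt e (mem_filter.1 he).1))
    (fun e₁ h₁ e₂ h₂ => by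
      simp only [coe_filter, Set.mem_ofPred_eq] at h₁ h₂
      exact fun hc => by_contra fun hne => hprop e₁ h₁.1 e₂ h₂.1 hne ⟨w, h₁.2, h₂.2⟩ hc)

lemma exists_colorFreeAt [DecidableEq V] {w : V}
    (hw : degIn ends A w < k) : ∃ γ < k, ColorFreeAt ends A c w γ := by
  classical
  have hused : #((A.filter (w ∈ ends ·)).image c) < #(range k) :=
    card_image_le.trans_lt (by simpa [degIn] using hw)
  obtain ⟨γ, hγk, hγ⟩ := exists_mem_notMem_of_card_lt_card hused
  exact ⟨γ, mem_range.1 hγk, fun e he hwe hce => hγ (mem_image.2 ⟨e, mem_filter.2 ⟨he, hwe⟩, hce⟩)⟩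

lemma IsProperColoring.edgeColorable_insert [DecidableEq E] (hc : IsProperColoring ends A k c)
    {e₀ : E} (he₀ : e₀ ∉ A) {γ : ℕ} (hγ : γ < k) (hfree : ∀ w ∈ ends e₀, ColorFreeAt ends A c w γ) :
    EdgeColorable ends (insert e₀ A) k := by
  classical
  have key : ∀ e ∈ A, (∃ v, v ∈ ends e₀ ∧ v ∈ ends e) → c e ≠ γ :=
    fun e he ⟨v, hv₀, hv⟩ => hfree v hv₀ e he hv
  refine ⟨Function.update c e₀ γ, fun e he => ?_, fun e₁ h₁ e₂ h₂ hne hsh => ?_⟩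
  · rcases mem_insert.1 he with rfl | he
    · simpa using hγ
    · simpa [ne_of_mem_of_not_mem he he₀] using hc.1 e he
  · rcases mem_insert.1 h₁ with rfl | hA₁ <;> rcases mem_insert.1 h₂ with rfl | hA₂
    · exact absurd rfl hne
    · simpa [Ne.symm hne] using (key e₂ hA₂ hsh).symm
    · simpa [hne] using key e₁ hA₁ (hsh.imp fun _ => And.symm)
    · simpa [ne_of_mem_of_not_mem hA₁ he₀, ne_of_mem_of_not_mem hA₂ he₀]
        using hc.2 e₁ hA₁ e₂ hA₂ hne hsh

end Coloring

lemma Bool.eq_of_ne_of_ne {a b c : Bool} (hab : a ≠ b) (hbc : b ≠ c) : a = c := by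
  cases a <;> cases b <;> cases c <;> simp_all

/-- Leave a vertex on the side of `v` by its `α`-edge and a vertex on the other side by its
`β`-edge: in a proper coloring, the vertices reachable from `v` are its `α`/`β` Kempe chain. -/
def KempeStep (ends : E → Sym2 V) (A : Finset E) (c : E → ℕ) (f : V → Bool) (v : V)
    (α β : ℕ) (x y : V) : Prop :=
  ∃ e ∈ A, ends e = s(x, y) ∧ c e = if f x = f v then α else β

section Kempe

open Relation

variable {ends : E → Sym2 V} {A : Finset E} {k : ℕ} {c : E → ℕ} {f : V → Bool} {u v : V}
  {α β : ℕ}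

lemma reflTransGen_kempeStep_of_mem_ends (hf : ∀ e x y, ends e = s(x, y) → f x ≠ f y)
    (hc : IsProperColoring ends A k c) (hβv : ColorFreeAt ends A c v β) {e : E} (he : e ∈ A)
    (hce : c e = α ∨ c e = β) {x : V} (hx : ReflTransGen (KempeStep ends A c f v α β) v x)
    (hxe : x ∈ ends e) {y : V} (hye : y ∈ ends e) :
    ReflTransGen (KempeStep ends A c f v α β) v y := by
  obtain ⟨z, hz⟩ := Sym2.mem_iff_exists.1 hxe
  suffices hzR : ReflTransGen (KempeStep ends A c f v α β) v z by
    rw [hz, Sym2.mem_iff] at hye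
    rcases hye with rfl | rfl <;> assumption
  by_cases hfwd : c e = if f x = f v then α else β
  · exact hx.tail ⟨e, he, hz, hfwd⟩
  rcases hx.cases_tail with rfl | ⟨x', hx', e', he', hx'x, hce'⟩
  · rw [if_pos rfl] at hfwd
    exact absurd (hce.resolve_left hfwd) (hβv e he hxe)
  -- otherwise `e` has the color of the edge `e'` by which the chain entered `x`, so `e = e'`
  have hside : f x' = f v ↔ f x ≠ f v :=
    ⟨fun h h' => hf e' x' x hx'x (h.trans h'.symm),
      fun h => Bool.eq_of_ne_of_ne (hf e' x' x hx'x) h⟩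
  have hcc : c e = c e' := by
    rw [hce']
    split_ifs at hfwd ⊢ <;> tauto
  obtain rfl : e = e' := by_contra fun hne =>
    hc.2 e he e' he' hne ⟨x, hxe, by rw [hx'x]; exact Sym2.mem_mk_right _ _⟩ hcc
  rw [hz, Sym2.eq_iff] at hx'x
  rcases hx'x with ⟨-, rfl⟩ | ⟨-, rfl⟩ <;> assumption

lemma not_reflTransGen_kempeStep (hf : ∀ e x y, ends e = s(x, y) → f x ≠ f y) (huv : f u ≠ f v)
    (hαu : ColorFreeAt ends A c u α) : ¬ ReflTransGen (KempeStep ends A c f v α β) v u := by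
  intro h
  rcases h.cases_tail with rfl | ⟨x, -, e, he, hxu, hce⟩
  · exact huv rfl
  rw [if_pos (Bool.eq_of_ne_of_ne (hf e x u hxu) huv)] at hce
  exact hαu e he (by rw [hxu]; exact Sym2.mem_mk_right _ _) hce

/-- Swapping `α` and `β` on the Kempe chain of `v` frees `α` at `v` without using it at `u`. -/
lemma IsProperColoring.exists_kempe_swap (hf : ∀ e x y, ends e = s(x, y) → f x ≠ f y)
    (hc : IsProperColoring ends A k c) (hα : α < k) (hβ : β < k) (huv : f u ≠ f v)
    (hαu : ColorFreeAt ends A c u α) (hβv : ColorFreeAt ends A c v β) :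
    ∃ c', IsProperColoring ends A k c' ∧ ColorFreeAt ends A c' u α ∧
      ColorFreeAt ends A c' v α := by
  classical
  set R := ReflTransGen (KempeStep ends A c f v α β) v
  set swapped : E → Prop := fun e => (c e = α ∨ c e = β) ∧ ∃ x ∈ ends e, R x
  have hR : ∀ e ∈ A, swapped e → ∀ y ∈ ends e, R y := fun e he ⟨hce, x, hxe, hx⟩ y hye =>
    reflTransGen_kempeStep_of_mem_ends hf hc hβv he hce hx hxe hye
  have hu : ¬ R u := not_reflTransGen_kempeStep hf huv hαu
  refine ⟨fun e => if swapped e then Equiv.swap α β (c e) else c e, ⟨fun e he => ?_, ?_⟩,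
    fun e he hue => ?_, fun e he hve => ?_⟩
  · dsimp only
    split_ifs with h
    · rcases h.1 with h | h <;> simp [h, hα, hβ]
    · exact hc.1 e he
  · rintro e₁ h₁ e₂ h₂ hne ⟨y, hy₁, hy₂⟩
    have hcne := hc.2 e₁ h₁ e₂ h₂ hne ⟨y, hy₁, hy₂⟩
    by_cases s₁ : swapped e₁ <;> by_cases s₂ : swapped e₂ <;> simp only [s₁, s₂, if_true, if_false]
    · exact (Equiv.injective _).ne hcne
    · have : ¬ (c e₂ = α ∨ c e₂ = β) := fun h => s₂ ⟨h, y, hy₂, hR e₁ h₁ s₁ y hy₁⟩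
      rcases s₁.1 with h | h <;> simp [h] <;> tauto
    · have : ¬ (c e₁ = α ∨ c e₁ = β) := fun h => s₁ ⟨h, y, hy₁, hR e₂ h₂ s₂ y hy₂⟩
      rcases s₂.1 with h | h <;> simp [h] <;> tauto
    · exact hcne
  · dsimp only
    split_ifs with h
    · exact absurd (hR e he h u hue) hu
    · exact hαu e he hue
  · have hβ' := hβv e he hve
    dsimp only
    split_ifs with h
    · rcases h.1 with h | h
      · simpa [h] using fun h' => hβ' (h.trans h'.symm)
      · exact absurd h hβ'
    · exact fun h' => h ⟨Or.inl h', v, hve, ReflTransGen.refl⟩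

end Kempe

theorem edgeColorable_of_degIn_le [DecidableEq V] {ends : E → Sym2 V} (hbip : IsBipartite ends)
    {k : ℕ} (A : Finset E) (hA : ∀ w, degIn ends A w ≤ k) : EdgeColorable ends A k := by
  classical
  obtain ⟨f, hf⟩ := hbip
  induction A using Finset.induction_on with
  | empty => exact ⟨fun _ => 0, by simp, by simp⟩
  | insert e₀ A he₀ ih =>
    obtain ⟨c, hc⟩ : ∃ c, IsProperColoring ends A k c :=
      ih fun w => (degIn_mono (subset_insert e₀ A) w).trans (hA w)
    obtain ⟨⟨u, v⟩, huv⟩ := Sym2.mk_surjective (ends e₀)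
    have hlt : ∀ w ∈ ends e₀, degIn ends A w < k := fun w hw => by
      have := hA w
      rw [degIn_insert he₀ hw] at this
      omega
    obtain ⟨α, hα, hαu⟩ := exists_colorFreeAt (c := c) (hlt u (huv ▸ Sym2.mem_mk_left u v))
    obtain ⟨β, hβ, hβv⟩ := exists_colorFreeAt (c := c) (hlt v (huv ▸ Sym2.mem_mk_right u v))
    obtain ⟨c', hc', hu, hv⟩ := hc.exists_kempe_swap hf hα hβ (hf e₀ u v huv.symm) hαu hβv
    refine hc'.edgeColorable_insert he₀ hα fun w hw => ?_
    rw [← huv, Function.uncurry_apply_pair, Sym2.mem_iff] at hw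
    rcases hw with rfl | rfl <;> assumption

lemma Finset.exists_injOn_lt_card {α : Type*} (s : Finset α) :
    ∃ g : α → ℕ, Set.InjOn g s ∧ ∀ a ∈ s, g a < #s := by
  classical
  refine ⟨fun a => if h : a ∈ s then s.equivFin ⟨a, h⟩ else 0, fun a ha b hb hab => ?_,
    fun a ha => by simp [ha]⟩
  rw [mem_coe] at ha hb
  simpa [ha, hb, Fin.val_inj] using hab

def splitEnds (ends : E → Sym2 V) (slot : V → E → ℕ) : E → Sym2 (V × ℕ) :=
  fun e => (ends e).map fun x => (x, slot x e / 2)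

section Split

variable {ends : E → Sym2 V} {slot : V → E → ℕ}

lemma mem_splitEnds {e : E} {w : V} {j : ℕ} :
    (w, j) ∈ splitEnds ends slot e ↔ w ∈ ends e ∧ slot w e / 2 = j := by
  simp [splitEnds, Sym2.mem_map]

lemma IsBipartite.splitEnds (h : IsBipartite ends) (slot : V → E → ℕ) :
    IsBipartite (splitEnds ends slot) := by
  obtain ⟨f, hf⟩ := h
  refine ⟨f ∘ Prod.fst, fun e p q hpq => ?_⟩
  obtain ⟨⟨a, b⟩, hab⟩ := Sym2.mk_surjective (ends e)
  rw [_root_.splitEnds, ← hab, Function.uncurry_apply_pair, Sym2.map_mk, Sym2.eq_iff] at hpq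
  rcases hpq with ⟨rfl, rfl⟩ | ⟨rfl, rfl⟩
  · exact hf e a b hab.symm
  · exact (hf e a b hab.symm).symm

variable [DecidableEq V] {S : Finset E}

lemma degIn_splitEnds_le_two (hinj : ∀ w, Set.InjOn (slot w) (S.filter (w ∈ ends ·)))
    (p : V × ℕ) : degIn (splitEnds ends slot) S p ≤ 2 := by
  obtain ⟨w, j⟩ := p
  calc degIn (splitEnds ends slot) S (w, j) ≤ #(Ico (2 * j) (2 * j + 2)) := by
        refine card_le_card_of_injOn (slot w) (fun e he => ?_) (fun e₁ h₁ e₂ h₂ => ?_)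
        · rw [mem_coe, mem_filter, mem_splitEnds] at he
          rw [mem_coe, mem_Ico]
          omega
        · simp only [coe_filter, Set.mem_ofPred_eq, mem_splitEnds] at h₁ h₂
          exact hinj w (by simpa using ⟨h₁.1, h₁.2.1⟩) (by simpa using ⟨h₂.1, h₂.2.1⟩)
    _ = 2 := by simp

/-- Two edges at `w` of the same color sit at different copies of `w`, and there are only
`⌈deg_S w / 2⌉` copies. -/
lemma two_mul_degIn_filter_le {m : ℕ} {c : E → ℕ}
    (hlt : ∀ w, ∀ e ∈ S.filter (w ∈ ends ·), slot w e < degIn ends S w)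
    (hc : IsProperColoring (splitEnds ends slot) S m c) (γ : ℕ) (w : V) :
    2 * degIn ends (S.filter (c · = γ)) w ≤ degIn ends S w + 1 := by
  have : degIn ends (S.filter (c · = γ)) w ≤ #(range ((degIn ends S w + 1) / 2)) := by
    refine card_le_card_of_injOn (slot w · / 2) (fun e he => ?_) (fun e₁ h₁ e₂ h₂ hj => ?_)
    · rw [mem_coe, mem_filter, mem_filter] at he
      have := hlt w e (mem_filter.2 ⟨he.1.1, he.2⟩)
      rw [mem_coe, mem_range]
      dsimp only
      omega
    · simp only [coe_filter, Set.mem_ofPred_eq, mem_filter] at h₁ h₂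
      by_contra hne
      exact hc.2 e₁ h₁.1.1 e₂ h₂.1.1 hne ⟨(w, slot w e₁ / 2), mem_splitEnds.2 ⟨h₁.2, rfl⟩,
        mem_splitEnds.2 ⟨h₂.2, hj.symm⟩⟩ (h₁.1.2.trans h₂.1.2.symm)
  rw [card_range] at this
  omega

end Split

theorem exists_balanced_split [DecidableEq V] [DecidableEq E] {ends : E → Sym2 V}
    (hbip : IsBipartite ends) (S : Finset E) :
    ∃ T ⊆ S, ∀ w, 2 * degIn ends T w ≤ degIn ends S w + 1 ∧
      2 * degIn ends (S \ T) w ≤ degIn ends S w + 1 := by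
  choose slot hinj hlt using fun w => (S.filter (w ∈ ends ·)).exists_injOn_lt_card
  obtain ⟨c, hc⟩ : ∃ c, IsProperColoring (splitEnds ends slot) S 2 c :=
    edgeColorable_of_degIn_le (hbip.splitEnds slot) S (degIn_splitEnds_le_two hinj)
  have hcompl : S \ S.filter (c · = 0) = S.filter (c · = 1) := by
    rw [← filter_not]
    exact filter_congr fun e he => by have := hc.1 e he; omega
  refine ⟨S.filter (c · = 0), filter_subset _ _, fun w =>
    ⟨two_mul_degIn_filter_le hlt hc 0 w, hcompl ▸ two_mul_degIn_filter_le hlt hc 1 w⟩⟩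

theorem exists_edgeColorable_pair [DecidableEq E] {ends : E → Sym2 V} (hbip : IsBipartite ends)
    {A B : Finset E} {k : ℕ} (hA : EdgeColorable ends A k) (hB : EdgeColorable ends B (k + 2)) :
    ∃ C D : Finset E, C ⊆ A ∪ B ∧ D ⊆ A ∪ B ∧ EdgeColorable ends C (k + 1) ∧
      EdgeColorable ends D (k + 1) ∧ #C + #D = #A + #B := by
  classical
  obtain ⟨T, hTS, hT⟩ := exists_balanced_split hbip ((A ∪ B) \ (A ∩ B))
  have hIS : Disjoint (A ∩ B) ((A ∪ B) \ (A ∩ B)) := disjoint_sdiff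
  have hcol : ∀ X ⊆ (A ∪ B) \ (A ∩ B),
      (∀ w, 2 * degIn ends X w ≤ degIn ends ((A ∪ B) \ (A ∩ B)) w + 1) →
      EdgeColorable ends (A ∩ B ∪ X) (k + 1) := by
    intro X hX hXdeg
    refine edgeColorable_of_degIn_le hbip _ fun w => ?_
    have := degIn_union_of_disjoint (ends := ends) (hIS.mono_right hX) w
    have := degIn_sdiff_add_degIn (ends := ends) (inter_subset_union : A ∩ B ⊆ A ∪ B) w
    have := degIn_union_add_degIn_inter (ends := ends) A B w
    have := hA.degIn_le w
    have := hB.degIn_le w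
    have := hXdeg w
    omega
  refine ⟨A ∩ B ∪ T, A ∩ B ∪ (((A ∪ B) \ (A ∩ B)) \ T),
    union_subset inter_subset_union (hTS.trans sdiff_subset),
    union_subset inter_subset_union (sdiff_subset.trans sdiff_subset),
    hcol T hTS fun w => (hT w).1, hcol _ sdiff_subset fun w => (hT w).2, ?_⟩
  rw [card_union_of_disjoint (hIS.mono_right hTS),
    card_union_of_disjoint (hIS.mono_right sdiff_subset)]
  have := card_sdiff_add_card_eq_card hTS
  have := card_sdiff_add_card_eq_card (inter_subset_union : A ∩ B ⊆ A ∪ B)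
  have := card_union_add_card_inter A B
  omega

lemma bddAbove_nu (ends : E → Sym2 V) (ground : Finset E) (k : ℕ) :
    BddAbove {n | ∃ F : Finset E, F ⊆ ground ∧ EdgeColorable ends F k ∧ #F = n} :=
  ⟨#ground, by rintro _ ⟨F, hF, -, rfl⟩; exact card_le_card hF⟩

lemma exists_edgeColorable_card_eq_nu (ends : E → Sym2 V) (ground : Finset E) (k : ℕ) :
    ∃ F ⊆ ground, EdgeColorable ends F k ∧ #F = nu ends ground k :=
  Nat.sSup_mem (s := {n | ∃ F, F ⊆ ground ∧ EdgeColorable ends F k ∧ #F = n})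
    ⟨0, ∅, empty_subset _, ⟨fun _ => 0, by simp, by simp⟩, rfl⟩ (bddAbove_nu ends ground k)

lemma card_le_nu {ends : E → Sym2 V} {ground F : Finset E} {k : ℕ} (hF : F ⊆ ground)
    (hc : EdgeColorable ends F k) : #F ≤ nu ends ground k :=
  le_csSup (bddAbove_nu ends ground k) ⟨F, hF, hc, rfl⟩

theorem nu_add_nu_add_two_le {ends : E → Sym2 V} (hbip : IsBipartite ends) (ground : Finset E)
    (k : ℕ) : nu ends ground k + nu ends ground (k + 2) ≤ 2 * nu ends ground (k + 1) := by
  classical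
  obtain ⟨A, hAg, hA, hAcard⟩ := exists_edgeColorable_card_eq_nu ends ground k
  obtain ⟨B, hBg, hB, hBcard⟩ := exists_edgeColorable_card_eq_nu ends ground (k + 2)
  obtain ⟨C, D, hC, hD, hCcol, hDcol, hcard⟩ := exists_edgeColorable_pair hbip hA hB
  have := card_le_nu (hC.trans (union_subset hAg hBg)) hCcol
  have := card_le_nu (hD.trans (union_subset hAg hBg)) hDcol
  omega

theorem stmt_9_general [Fintype E] (ends : E → Sym2 V)
    (hbip : IsBipartite ends)
    (k : ℕ) (hk : 1 ≤ k) :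
    (nu ends (Finset.univ : Finset E) k : ℤ) -
        nu ends (Finset.univ : Finset E) (k - 1) ≥
      (nu ends (Finset.univ : Finset E) (k + 1) : ℤ) -
        nu ends (Finset.univ : Finset E) k := by
  obtain ⟨k, rfl⟩ := Nat.exists_eq_add_of_le' hk
  have := nu_add_nu_add_two_le hbip (Finset.univ : Finset E) k
  rw [Nat.add_sub_cancel, show k + 1 + 1 = k + 2 from rfl]
  omega

/-- For a finite bipartite loopless multigraph, the successive differences
`ν_{k+1}(G) - ν_k(G)` are non-increasing: for every `k ≥ 1`,
`ν_k(G) - ν_{k-1}(G) ≥ ν_{k+1}(G) - ν_k(G)`. -/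
theorem stmt_9 [Fintype V] [Fintype E] [DecidableEq V] (ends : E → Sym2 V)
    (hloop : ∀ e : E, ¬ (ends e).IsDiag) (hbip : IsBipartite ends)
    (k : ℕ) (hk : 1 ≤ k) :
    (nu ends (Finset.univ : Finset E) k : ℤ) -
        nu ends (Finset.univ : Finset E) (k - 1) ≥
      (nu ends (Finset.univ : Finset E) (k + 1) : ℤ) -
        nu ends (Finset.univ : Finset E) k :=
  stmt_9_general ends hbip k hk
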